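/- arXiv:1307.3943 — 2 statements merged into one kernel-verified Lean document; each statement's English description precedes it below -/
import Mathlib

section
/- Let X be a metric space and S a set of cardinality bigger than card(X × ℕ). Suppose that for each ε > 0 there is an (ε,ε)-Lipschitz partition of unity f : X → Δ(S) such that the family {f⁻¹(st(v))}_{v∈S} is uniformly bounded. Then there exist functions α : (0,∞) → (0,∞) and M : (0,∞) × (0,∞) → (0,∞) such that LsExtDim(X, α, M) ≤ ∞, i.e., for any K > 0, any ε > 0, and any subset A of X, every (α(ε),α(ε))-Lipschitz and K-cobounded partition of unity f : A → Δ(S) extends to an (ε,ε)-Lipschitz, M(ε,K)-cobounded partition of unity g : X → Δ(S). -/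
universe u

/-- The `l¹` distance between two (finitely supported) functions `S → ℝ`,
modeling the metric of `Δ(S) ⊆ l¹(S)`. -/
noncomputable def l1dist {S : Type*} (φ ψ : S → ℝ) : ℝ := ∑ᶠ v, |φ v - ψ v|

/-- `φ` is a point of `Δ(S)`. -/
def IsDelta {S : Type*} (φ : S → ℝ) : Prop :=
  (∀ v, 0 ≤ φ v) ∧ (Function.support φ).Finite ∧ ∑ᶠ v, φ v = 1

/-- `f` is a partition of unity on `A` with values in `Δ(S)`. -/
def PartUnityOn {X S : Type*} (f : X → S → ℝ) (A : Set X) : Prop :=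
  ∀ a ∈ A, IsDelta (f a)

/-- `f` is `(ε,ε)`-Lipschitz on `A` (with respect to the `l¹` metric on `Δ(S)`). -/
def LipschitzEpsOn {X S : Type*} [MetricSpace X] (ε : ℝ) (f : X → S → ℝ) (A : Set X) : Prop :=
  ∀ x ∈ A, ∀ y ∈ A, l1dist (f x) (f y) ≤ ε * dist x y + ε

/-- `f` is `K`-cobounded on `A`: for every vertex `v`, the preimage of the star of `v`
has diameter at most `K`. -/
def CoboundedOn {X S : Type*} [MetricSpace X] (K : ℝ) (f : X → S → ℝ) (A : Set X) : Prop :=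
  ∀ v : S, EMetric.diam {x ∈ A | 0 < f x v} ≤ ENNReal.ofReal K


/-!
Fix `ε` and take a partition of unity `h` at scale `ε / 2` whose stars have diameter at most
`Mh`. Off `A`, the extension is `h` followed by an affine vertex map: a vertex `v` of `h` whose
star meets `A` at some `a` is sent to `f a`; every other vertex is sent to a fresh vertex `w v`,
unused by `f`. Such fresh vertices exist because `f` uses at most `#(X × ℕ) < #S` vertices.
Affine vertex maps do not increase `l¹` distances, so the extension is `(ε/2, ε/2)`-Lipschitz off
`A`; at `a ∈ A` it averages values `f b` with `dist a b ≤ Mh`, hence lies within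
`α * (Mh + 1) ≤ ε / 2` of `f a`, which glues the two pieces. A star of the extension lies either
in the `Mh`-neighbourhood of a star of `f`, or in a single star of `h` (the fresh vertices are
distinct), so its diameter is at most `2 * Mh + K`.
-/

open Function Set

section Simplex

variable {S : Type*}

lemma l1dist_eq_sum {φ ψ : S → ℝ} {t : Finset S} (hφ : support φ ⊆ t)
    (hψ : support ψ ⊆ t) : l1dist φ ψ = ∑ u ∈ t, |φ u - ψ u| := by
  refine finsum_eq_finsetSum_of_support_subset _ fun u hu => ?_
  have hu' : u ∈ support fun u => φ u - ψ u := by simpa using hu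
  exact union_subset hφ hψ (support_sub φ ψ hu')

lemma exists_finset_superset₂ {a b : Set S} (ha : a.Finite) (hb : b.Finite) :
    ∃ t : Finset S, a ⊆ t ∧ b ⊆ t :=
  ⟨(ha.union hb).toFinset, by simp [subset_union_left], by simp [subset_union_right]⟩

lemma exists_finset_forall_support_subset {q : S → S → ℝ} (s : Finset S)
    (hq : ∀ v, (support (q v)).Finite) : ∃ t : Finset S, ∀ v ∈ s, support (q v) ⊆ t := by
  classical
  exact ⟨s.biUnion fun v => (hq v).toFinset, fun v hv u hu => by simpa using ⟨v, hv, hu⟩⟩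

lemma l1dist_comm (φ ψ : S → ℝ) : l1dist φ ψ = l1dist ψ φ :=
  finsum_congr fun _ => abs_sub_comm _ _

lemma l1dist_triangle {φ ψ ρ : S → ℝ} (hφ : (support φ).Finite) (hψ : (support ψ).Finite)
    (hρ : (support ρ).Finite) : l1dist φ ρ ≤ l1dist φ ψ + l1dist ψ ρ := by
  obtain ⟨t, hφt, hψt⟩ := exists_finset_superset₂ hφ hψ
  obtain ⟨t', ht', hρt'⟩ := exists_finset_superset₂ t.finite_toSet hρ
  rw [l1dist_eq_sum (hφt.trans ht') hρt', l1dist_eq_sum (hφt.trans ht') (hψt.trans ht'),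
    l1dist_eq_sum (hψt.trans ht') hρt', ← Finset.sum_add_distrib]
  exact Finset.sum_le_sum fun u _ => abs_sub_le _ _ _

lemma IsDelta.sum_eq_one {φ : S → ℝ} (hφ : IsDelta φ) {t : Finset S}
    (ht : support φ ⊆ t) : ∑ u ∈ t, φ u = 1 := by
  rw [← finsum_eq_finsetSum_of_support_subset _ ht, hφ.2.2]

lemma isDelta_single [DecidableEq S] (v : S) : IsDelta (Pi.single v (1 : ℝ)) := by
  refine ⟨fun u => ?_, (finite_singleton v).subset Pi.support_single_subset, ?_⟩
  · rw [Pi.single_apply]; split_ifs <;> norm_num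
  · rw [finsum_eq_single _ v fun u hu => Pi.single_eq_of_ne hu 1, Pi.single_eq_same]

/-- The affine map `Δ(S) → Δ(S)` sending the vertex `v` to `q v`. -/
noncomputable def deltaBind (φ : S → ℝ) (q : S → S → ℝ) : S → ℝ :=
  fun u => ∑ᶠ v, φ v * q v u

variable {φ ψ ρ : S → ℝ} {q : S → S → ℝ}

lemma deltaBind_eq_sum {s : Finset S} (hs : support φ ⊆ s) (u : S) :
    deltaBind φ q u = ∑ v ∈ s, φ v * q v u :=
  finsum_eq_finsetSum_of_support_subset _ fun v hv =>
    hs (mem_support.mpr fun h0 => hv (by simp [h0]))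

lemma support_deltaBind_subset {s t : Finset S} (hs : support φ ⊆ s)
    (ht : ∀ v ∈ s, support (q v) ⊆ t) : support (deltaBind φ q) ⊆ t := by
  intro u hu
  by_contra hut
  refine hu ((deltaBind_eq_sum hs u).trans (Finset.sum_eq_zero fun v hv => ?_))
  rw [notMem_support.mp fun h => hut (ht v hv h), mul_zero]

lemma sum_sum_mul_eq_of_isDelta (hq : ∀ v, IsDelta (q v)) {s t : Finset S}
    (ht : ∀ v ∈ s, support (q v) ⊆ t) (c : S → ℝ) :
    ∑ u ∈ t, ∑ v ∈ s, c v * q v u = ∑ v ∈ s, c v := by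
  rw [Finset.sum_comm]
  exact Finset.sum_congr rfl fun v hv => by
    rw [← Finset.mul_sum, (hq v).sum_eq_one (ht v hv), mul_one]

lemma IsDelta.deltaBind (hφ : IsDelta φ) (hq : ∀ v, IsDelta (q v)) :
    IsDelta (deltaBind φ q) := by
  obtain ⟨s, hs⟩ := hφ.2.1.exists_finset_coe
  obtain ⟨t, ht⟩ := exists_finset_forall_support_subset s fun v => (hq v).2.1
  have hsupp := support_deltaBind_subset hs.ge ht
  refine ⟨fun u => ?_, t.finite_toSet.subset hsupp, ?_⟩
  · rw [deltaBind_eq_sum hs.ge]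
    exact Finset.sum_nonneg fun v _ => mul_nonneg (hφ.1 v) ((hq v).1 u)
  · rw [finsum_eq_finsetSum_of_support_subset _ hsupp]
    simp_rw [deltaBind_eq_sum hs.ge]
    rw [sum_sum_mul_eq_of_isDelta hq ht, hφ.sum_eq_one hs.ge]

lemma l1dist_deltaBind_le (hφ : (support φ).Finite) (hψ : (support ψ).Finite)
    (hq : ∀ v, IsDelta (q v)) : l1dist (deltaBind φ q) (deltaBind ψ q) ≤ l1dist φ ψ := by
  obtain ⟨s, hφs, hψs⟩ := exists_finset_superset₂ hφ hψ
  obtain ⟨t, ht⟩ := exists_finset_forall_support_subset s fun v => (hq v).2.1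
  rw [l1dist_eq_sum (support_deltaBind_subset hφs ht) (support_deltaBind_subset hψs ht),
    l1dist_eq_sum hφs hψs, ← sum_sum_mul_eq_of_isDelta hq ht]
  refine Finset.sum_le_sum fun u _ => ?_
  rw [deltaBind_eq_sum hφs, deltaBind_eq_sum hψs, ← Finset.sum_sub_distrib]
  refine (Finset.abs_sum_le_sum_abs _ _).trans_eq (Finset.sum_congr rfl fun v _ => ?_)
  rw [← sub_mul, abs_mul, abs_of_nonneg ((hq v).1 u)]

lemma l1dist_deltaBind_le_of_forall {c : ℝ} (hφ : IsDelta φ) (hρ : (support ρ).Finite)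
    (hq : ∀ v, (support (q v)).Finite) (hc : ∀ v, φ v ≠ 0 → l1dist (q v) ρ ≤ c) :
    l1dist (deltaBind φ q) ρ ≤ c := by
  obtain ⟨s, hs⟩ := hφ.2.1.exists_finset_coe
  obtain ⟨t₀, ht₀⟩ := exists_finset_forall_support_subset s hq
  obtain ⟨t, ht₀t, hρt⟩ := exists_finset_superset₂ t₀.finite_toSet hρ
  have hqt : ∀ v ∈ s, support (q v) ⊆ t := fun v hv => (ht₀ v hv).trans ht₀t
  have hφ1 := hφ.sum_eq_one hs.ge
  have hcoord (u : S) : |deltaBind φ q u - ρ u| ≤ ∑ v ∈ s, φ v * |q v u - ρ u| := by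
    have hdiff : deltaBind φ q u - ρ u = ∑ v ∈ s, φ v * (q v u - ρ u) := by
      simp only [mul_sub, Finset.sum_sub_distrib, ← Finset.sum_mul, hφ1, one_mul,
        deltaBind_eq_sum hs.ge]
    rw [hdiff]
    refine (Finset.abs_sum_le_sum_abs _ _).trans_eq (Finset.sum_congr rfl fun v _ => ?_)
    rw [abs_mul, abs_of_nonneg (hφ.1 v)]
  calc l1dist (deltaBind φ q) ρ ≤ ∑ u ∈ t, ∑ v ∈ s, φ v * |q v u - ρ u| := by
        rw [l1dist_eq_sum (support_deltaBind_subset hs.ge hqt) hρt]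
        exact Finset.sum_le_sum fun u _ => hcoord u
    _ = ∑ v ∈ s, φ v * l1dist (q v) ρ := by
        rw [Finset.sum_comm]
        exact Finset.sum_congr rfl fun v hv => by
          rw [← Finset.mul_sum, l1dist_eq_sum (hqt v hv) hρt]
    _ ≤ ∑ v ∈ s, φ v * c := Finset.sum_le_sum fun v hv =>
        mul_le_mul_of_nonneg_left (hc v (mem_support.mp (hs ▸ Finset.mem_coe.mpr hv))) (hφ.1 v)
    _ = c := by rw [← Finset.sum_mul, hφ1, one_mul]

lemma exists_pos_of_deltaBind_pos {u : S} (hφ : ∀ v, 0 ≤ φ v) (hq : ∀ v, 0 ≤ q v u)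
    (h : 0 < deltaBind φ q u) : ∃ v, 0 < φ v ∧ 0 < q v u := by
  by_contra! hcon
  have hterm : ∀ v, φ v * q v u = 0 := fun v => by
    rcases (hφ v).eq_or_lt with h0 | h0
    · rw [← h0, zero_mul]
    · rw [le_antisymm (hcon v h0) (hq v), mul_zero]
  simp [deltaBind, hterm] at h

end Simplex

section Lipschitz

variable {X S : Type*} [MetricSpace X]

lemma coboundedOn_iff {K : ℝ} (hK : 0 ≤ K) {f : X → S → ℝ} {A : Set X} :
    CoboundedOn K f A ↔
      ∀ v, ∀ x ∈ A, ∀ y ∈ A, 0 < f x v → 0 < f y v → dist x y ≤ K := by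
  simp only [CoboundedOn, EMetric.diam, Metric.ediam_le_iff, mem_ofPred_eq, edist_le_ofReal hK]
  grind

lemma LipschitzEpsOn.mono {α ε : ℝ} {f : X → S → ℝ} {A : Set X}
    (hf : LipschitzEpsOn α f A) (hαε : α ≤ ε) : LipschitzEpsOn ε f A := fun x hx y hy =>
  (hf x hx y hy).trans (by nlinarith [dist_nonneg (x := x) (y := y)])

lemma LipschitzEpsOn.piecewise {ε : ℝ} (hε : 0 ≤ ε) {f g : X → S → ℝ} {A : Set X}
    [DecidablePred (· ∈ A)] (hf : PartUnityOn f A) (hg : PartUnityOn g univ)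
    (hfL : LipschitzEpsOn ε f A) (hgL : LipschitzEpsOn (ε / 2) g univ)
    (hfg : ∀ a ∈ A, l1dist (g a) (f a) ≤ ε / 2) :
    LipschitzEpsOn ε (A.piecewise f g) univ := by
  have hgL' : ∀ x y, l1dist (g x) (g y) ≤ ε / 2 * dist x y + ε / 2 :=
    fun x y => hgL x trivial y trivial
  have hfin : ∀ x, (support (g x)).Finite := fun x => (hg x trivial).2.1
  have hdist : ∀ x y : X, ε / 2 * dist x y ≤ ε * dist x y := fun x y => by
    nlinarith [dist_nonneg (x := x) (y := y)]
  have hmixed : ∀ a ∈ A, ∀ y, l1dist (f a) (g y) ≤ ε * dist a y + ε := fun a ha y => by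
    have := l1dist_triangle (hf a ha).2.1 (hfin a) (hfin y)
    linarith [l1dist_comm (f a) (g a) ▸ hfg a ha, hgL' a y, hdist a y]
  intro x _ y _
  by_cases hx : x ∈ A <;> by_cases hy : y ∈ A <;>
    simp only [piecewise_eq_of_mem, piecewise_eq_of_notMem, hx, hy, not_false_eq_true]
  · exact hfL x hx y hy
  · exact hmixed x hx y
  · rw [l1dist_comm, dist_comm]; exact hmixed y hy x
  · linarith [hgL' x y, hdist x y]

end Lipschitz

lemma exists_injective_forall_apply_eq_zero {X S : Type u}
    (hS : Cardinal.mk (X × ℕ) < Cardinal.mk S)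
    {A : Set X} {f : X → S → ℝ} (hf : ∀ a ∈ A, (support (f a)).Finite) :
    ∃ w : S → S, Injective w ∧ ∀ v, ∀ a ∈ A, f a (w v) = 0 := by
  rcases isEmpty_or_nonempty X with hX | hX
  · exact ⟨id, injective_id, fun _ a => isEmptyElim a⟩
  set U := ⋃ a ∈ A, support (f a)
  have hU : Cardinal.mk U < Cardinal.mk S := by
    refine lt_of_le_of_lt ?_ hS
    calc Cardinal.mk U ≤ Cardinal.mk A * ⨆ a : A, Cardinal.mk (support (f a)) :=
          Cardinal.mk_biUnion_le _ A
      _ ≤ Cardinal.mk X * Cardinal.aleph0 :=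
          mul_le_mul' (Cardinal.mk_set_le A)
            (ciSup_le' fun a => (hf a a.2).lt_aleph0.le)
      _ = Cardinal.mk (X × ℕ) := by simp
  have : Infinite S :=
    Cardinal.infinite_iff.mpr ((Cardinal.infinite_iff.mp inferInstance).trans hS.le)
  obtain ⟨e⟩ := Cardinal.eq.mp (Cardinal.mk_compl_of_infinite U hU)
  refine ⟨fun v => e.symm v, Subtype.val_injective.comp e.symm.injective, fun v a ha => ?_⟩
  by_contra hne
  exact (e.symm v).2 (mem_biUnion ha hne)

section Extension

variable {X S : Type*} (h : X → S → ℝ) (A : Set X) (f : X → S → ℝ) (w : S → S)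

open Classical in
noncomputable def vertexImage (v : S) : S → ℝ :=
  if hv : ∃ a ∈ A, 0 < h a v then f hv.choose else Pi.single (w v) 1

open Classical in
noncomputable def extension : X → S → ℝ :=
  A.piecewise f fun x => deltaBind (h x) (vertexImage h A f w)

variable {h A f w}

lemma exists_vertexImage_eq {v : S} (hv : ∃ a ∈ A, 0 < h a v) :
    ∃ a ∈ A, 0 < h a v ∧ vertexImage h A f w v = f a := by
  classical
  exact ⟨hv.choose, hv.choose_spec.1, hv.choose_spec.2, dif_pos hv⟩

open Classical in
lemma vertexImage_of_not_exists {v : S} (hv : ¬∃ a ∈ A, 0 < h a v) :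
    vertexImage h A f w v = Pi.single (w v) 1 :=
  dif_neg hv

lemma isDelta_vertexImage (hf : PartUnityOn f A) (v : S) : IsDelta (vertexImage h A f w v) := by
  classical
  by_cases hv : ∃ a ∈ A, 0 < h a v
  · obtain ⟨a, ha, -, heq⟩ := exists_vertexImage_eq (f := f) (w := w) hv
    exact heq ▸ hf a ha
  · exact vertexImage_of_not_exists hv ▸ isDelta_single (w v)

lemma extension_of_mem {a : X} (ha : a ∈ A) : extension h A f w a = f a := by
  classical
  exact piecewise_eq_of_mem _ _ _ ha

lemma partUnityOn_extension (hh : PartUnityOn h univ) (hf : PartUnityOn f A) :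
    PartUnityOn (extension h A f w) univ := by
  classical
  intro x _
  by_cases hx : x ∈ A
  · rw [extension_of_mem hx]; exact hf x hx
  · rw [extension, piecewise_eq_of_notMem _ _ _ hx]
    exact (hh x trivial).deltaBind (isDelta_vertexImage hf)

lemma l1dist_deltaBind_vertexImage_le [MetricSpace X] {Mh α : ℝ} (hh : PartUnityOn h univ)
    (hhcob : CoboundedOn Mh h univ) (hMh : 0 ≤ Mh) (hf : PartUnityOn f A)
    (hfL : LipschitzEpsOn α f A) (hα : 0 ≤ α) {a : X} (ha : a ∈ A) :
    l1dist (deltaBind (h a) (vertexImage h A f w)) (f a) ≤ α * Mh + α := by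
  refine l1dist_deltaBind_le_of_forall (hh a trivial) (hf a ha).2.1
    (fun v => (isDelta_vertexImage hf v).2.1) fun v hv => ?_
  have hav : 0 < h a v := ((hh a trivial).1 v).lt_of_ne' hv
  obtain ⟨b, hb, hbv, heq⟩ := exists_vertexImage_eq (f := f) (w := w) ⟨a, ha, hav⟩
  have hba : dist b a ≤ Mh := (coboundedOn_iff hMh).mp hhcob v b trivial a trivial hbv hav
  rw [heq]
  nlinarith [hfL b hb a ha]

lemma lipschitzEpsOn_extension [MetricSpace X] {ε Mh α : ℝ} (hh : PartUnityOn h univ)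
    (hhL : LipschitzEpsOn (ε / 2) h univ) (hhcob : CoboundedOn Mh h univ) (hMh : 0 ≤ Mh)
    (hf : PartUnityOn f A) (hfL : LipschitzEpsOn α f A) (hα : 0 ≤ α)
    (hαMh : α * (Mh + 1) ≤ ε / 2) : LipschitzEpsOn ε (extension h A f w) univ := by
  classical
  have hq := isDelta_vertexImage (h := h) (w := w) hf
  refine LipschitzEpsOn.piecewise (by nlinarith) hf
    (fun x _ => (hh x trivial).deltaBind hq) (hfL.mono (by nlinarith))
    (fun x _ y _ => (l1dist_deltaBind_le (hh x trivial).2.1 (hh y trivial).2.1 hq).trans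
      (hhL x trivial y trivial)) fun a ha => ?_
  linarith [l1dist_deltaBind_vertexImage_le (w := w) hh hhcob hMh hf hfL hα ha]

lemma extension_pos_cases [MetricSpace X] {Mh : ℝ} (hh : PartUnityOn h univ)
    (hhcob : CoboundedOn Mh h univ) (hMh : 0 ≤ Mh) (hf : PartUnityOn f A) {z : X} {u : S}
    (hz : 0 < extension h A f w z u) :
    (∃ b ∈ A, 0 < f b u ∧ dist z b ≤ Mh) ∨ ∃ v, u = w v ∧ 0 < h z v := by
  classical
  by_cases hzA : z ∈ A
  · rw [extension_of_mem hzA] at hz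
    exact .inl ⟨z, hzA, hz, by simpa using hMh⟩
  rw [extension, piecewise_eq_of_notMem _ _ _ hzA] at hz
  obtain ⟨v, hzv, hvu⟩ := exists_pos_of_deltaBind_pos (hh z trivial).1
    (fun v => (isDelta_vertexImage hf v).1 u) hz
  by_cases hv : ∃ a ∈ A, 0 < h a v
  · obtain ⟨b, hb, hbv, heq⟩ := exists_vertexImage_eq (f := f) (w := w) hv
    exact .inl ⟨b, hb, heq ▸ hvu,
      (coboundedOn_iff hMh).mp hhcob v z trivial b trivial hzv hbv⟩
  · rw [vertexImage_of_not_exists hv, Pi.single_apply] at hvu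
    refine .inr ⟨v, ?_, hzv⟩
    by_contra hne
    simp [hne] at hvu

lemma coboundedOn_extension [MetricSpace X] {Mh K : ℝ} (hh : PartUnityOn h univ)
    (hhcob : CoboundedOn Mh h univ) (hMh : 0 ≤ Mh) (hf : PartUnityOn f A)
    (hfcob : CoboundedOn K f A) (hK : 0 ≤ K) (hw : Injective w)
    (hfresh : ∀ v, ∀ a ∈ A, f a (w v) = 0) :
    CoboundedOn (2 * Mh + K) (extension h A f w) univ := by
  refine (coboundedOn_iff (by positivity)).mpr fun u x _ y _ hxu hyu => ?_
  rcases extension_pos_cases hh hhcob hMh hf hxu with ⟨b, hb, hbu, hxb⟩ | ⟨v, rfl, hxv⟩ <;>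
    rcases extension_pos_cases hh hhcob hMh hf hyu with
      ⟨b', hb', hbu', hyb'⟩ | ⟨v', huv, hyv⟩
  · have hbb' := (coboundedOn_iff hK).mp hfcob u b hb b' hb' hbu hbu'
    linarith [dist_triangle4 x b b' y, dist_comm y b']
  · exact absurd (hfresh v' b hb) (huv ▸ hbu).ne'
  · exact absurd (hfresh v b' hb') hbu'.ne'
  · rw [hw huv] at hxv
    linarith [(coboundedOn_iff hMh).mp hhcob v' x trivial y trivial hxv hyv]

end Extension

/-- Theorem 6.4, (1) ⇒ (2) for `n = ∞`. If for each `ε > 0` there is an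
`(ε,ε)`-Lipschitz partition of unity `f : X → Δ(S)` with `{f⁻¹(st v)}` uniformly bounded,
then there are `α, M` such that every `(α ε, α ε)`-Lipschitz `K`-cobounded partition of
unity on a subset `A ⊆ X` extends to an `(ε,ε)`-Lipschitz `M ε K`-cobounded partition of
unity on `X`. -/
theorem stmt9 {X : Type u} [MetricSpace X] (S : Type u)
    (hS : Cardinal.mk (X × ℕ) < Cardinal.mk S)
    (h : ∀ ε > (0:ℝ), ∃ f : X → S → ℝ, PartUnityOn f Set.univ ∧
      LipschitzEpsOn ε f Set.univ ∧ ∃ M' : ℝ, 0 < M' ∧ CoboundedOn M' f Set.univ) :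
    ∃ α : ℝ → ℝ, ∃ M : ℝ → ℝ → ℝ, (∀ ε > (0:ℝ), 0 < α ε) ∧
      (∀ ε > (0:ℝ), ∀ K > (0:ℝ), 0 < M ε K) ∧
      ∀ K > (0:ℝ), ∀ ε > (0:ℝ), ∀ (A : Set X) (f : X → S → ℝ),
        PartUnityOn f A → LipschitzEpsOn (α ε) f A → CoboundedOn K f A →
        ∃ g : X → S → ℝ, (∀ a ∈ A, g a = f a) ∧ PartUnityOn g Set.univ ∧
          LipschitzEpsOn ε g Set.univ ∧ CoboundedOn (M ε K) g Set.univ := by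
  have h' : ∀ ε : ℝ, ∃ (F : X → S → ℝ) (M' : ℝ), 0 < M' ∧
      (0 < ε → PartUnityOn F univ ∧ LipschitzEpsOn ε F univ ∧ CoboundedOn M' F univ) := by
    intro ε
    by_cases hε : 0 < ε
    · obtain ⟨F, hF, hFL, M', hM', hFcob⟩ := h ε hε
      exact ⟨F, M', hM', fun _ => ⟨hF, hFL, hFcob⟩⟩
    · exact ⟨0, 1, one_pos, fun h => absurd h hε⟩
  choose F Mf hMf hF using h'
  refine ⟨fun ε => ε / (2 * (Mf (ε / 2) + 1)), fun ε K => 2 * Mf (ε / 2) + K,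
    fun ε hε => by have := hMf (ε / 2); positivity,
    fun ε _ K hK => by linarith [hMf (ε / 2)], ?_⟩
  intro K hK ε hε A f hf hfL hfcob
  obtain ⟨hh, hhL, hhcob⟩ := hF (ε / 2) (half_pos hε)
  obtain ⟨w, hw, hfresh⟩ := exists_injective_forall_apply_eq_zero hS fun a ha => (hf a ha).2.1
  have hMh := (hMf (ε / 2)).le
  have hα : ε / (2 * (Mf (ε / 2) + 1)) * (Mf (ε / 2) + 1) = ε / 2 := by
    field_simp
  refine ⟨extension (F (ε / 2)) A f w, fun a ha => extension_of_mem ha,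
    partUnityOn_extension hh hf,
    lipschitzEpsOn_extension hh hhL hhcob hMh hf hfL (by positivity) hα.le,
    coboundedOn_extension hh hhcob hMh hf hfcob hK.le hw hfresh⟩
end

section
/- Let X be a metric space, n a non-negative integer, and S a set of cardinality bigger than card(X × ℕ). The following are equivalent: (1) for each ε > 0 there is an (ε,ε)-Lipschitz partition of unity f : X → Δ(S)^(n) such that the family {f⁻¹(st(v))}_{v∈S} is uniformly bounded; (2) there exist functions α : (0,∞) → (0,∞) and M : (0,∞) × (0,∞) → (0,∞) such that LsExtDim(X, α, M) ≤ n. -/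
/-!
(2) ⇒ (1) is the case `A = ∅` of the extension property.

(1) ⇒ (2): given `f` on `A`, take a `δ/4`-Lipschitz, `B`-cobounded partition of unity
`h : X → Δ(T)⁽ⁿ⁾` from (1), put `s = 8/δ`, and push `h` into `Δ(S)` along a vertex map `p`:
a vertex whose star comes within `2s` of `A` goes to a vertex of weight `≥ 1/(n+1)` of `f` at a
point of `A` close to that star, every other vertex goes injectively to a vertex unused by `f`
(possible since `card S > card (X × ℕ)`). With `a` a retraction onto `A` moving points by at most
`d(·, A) + 1` and `λ = min (d(·, A)/s) 1`, the extension is `(1 - λ) f ∘ a + λ p_* h`. When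
`α(δ)` is small, `f` varies so little along `A` that where `λ < 1` every vertex used by
`p_* h` already carries weight for `f ∘ a`, so the blend stays in the `n`-skeleton; Lipschitz
and coboundedness constants are inherited from `f` and `h`.
-/

universe u

/-- `φ` is a point of the `n`-skeleton `Δ(S)⁽ⁿ⁾`:
its support has cardinality at most `n + 1`. -/
def IsDeltaSkel {S : Type*} (n : ℕ∞) (φ : S → ℝ) : Prop :=
  IsDelta φ ∧ (Function.support φ).encard ≤ n + 1

/-- `f` is a partition of unity on `A` with values in `Δ(S)⁽ⁿ⁾`. -/
def PartUnitySkelOn {X S : Type*} (n : ℕ∞) (f : X → S → ℝ) (A : Set X) : Prop :=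
  ∀ a ∈ A, IsDeltaSkel n (f a)

/-- `LsExtDim(X, α, M) ≤ n` (Definition 6.2). -/
def LsExtDimLE (X : Type u) [MetricSpace X] (n : ℕ∞) (Dα : Set ℝ)
    (α : ℝ → ℝ) (M : ℝ → ℝ → ℝ) : Prop :=
  ∀ S : Type u, Cardinal.mk (X × ℕ) < Cardinal.mk S →
    ∀ K : ℝ, 0 < K → ∀ δ ∈ Dα, ∀ (A : Set X) (f : X → S → ℝ),
      PartUnitySkelOn n f A → LipschitzEpsOn (α δ) f A → CoboundedOn K f A →
      ∃ g : X → S → ℝ, (∀ a ∈ A, g a = f a) ∧ PartUnitySkelOn n g Set.univ ∧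
        LipschitzEpsOn δ g Set.univ ∧ CoboundedOn (M δ K) g Set.univ

open Function Metric Set

section Simplex

variable {S : Type*}

lemma support_abs_sub_subset (φ ψ : S → ℝ) :
    support (fun v => |φ v - ψ v|) ⊆ support φ ∪ support ψ := by
  intro v hv
  by_contra h
  simp_all

lemma abs_sub_le_l1dist {φ ψ : S → ℝ} (hφ : (support φ).Finite) (hψ : (support ψ).Finite)
    (v : S) : |φ v - ψ v| ≤ l1dist φ ψ :=
  single_le_finsum v ((hφ.union hψ).subset (support_abs_sub_subset φ ψ)) fun _ => abs_nonneg _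

lemma pos_of_le_of_l1dist_lt {φ ψ : S → ℝ} (hφ : (support φ).Finite) (hψ : (support ψ).Finite)
    {r : ℝ} {v : S} (hv : r ≤ φ v) (hφψ : l1dist φ ψ < r) : 0 < ψ v := by
  linarith [abs_sub_le_l1dist hφ hψ v, le_abs_self (φ v - ψ v)]

lemma IsDelta.l1dist_le_two {φ ψ : S → ℝ} (hφ : IsDelta φ) (hψ : IsDelta ψ) :
    l1dist φ ψ ≤ 2 :=
  calc l1dist φ ψ ≤ ∑ᶠ v, (φ v + ψ v) :=
        finsum_le_finsum' ((hφ.2.1.union hψ.2.1).subset (support_abs_sub_subset φ ψ))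
          ((hφ.2.1.union hψ.2.1).subset (support_add φ ψ))
          fun v => abs_sub_le_iff.2 ⟨by linarith [hψ.1 v], by linarith [hφ.1 v]⟩
    _ = 2 := by rw [finsum_add_distrib hφ.2.1 hψ.2.1, hφ.2.2, hψ.2.2]; norm_num

lemma isDeltaSkel_single [DecidableEq S] (n : ℕ∞) (v : S) : IsDeltaSkel n (Pi.single v 1) := by
  have hsupp : support (Pi.single v (1 : ℝ)) = {v} := Pi.support_single_of_ne one_ne_zero
  refine ⟨⟨fun w => ?_, by simp [hsupp], ?_⟩, by simp [hsupp]⟩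
  · by_cases hw : w = v <;> simp [hw]
  · rw [finsum_eq_single _ v fun w hw => Pi.single_eq_of_ne hw 1, Pi.single_eq_same]

lemma IsDeltaSkel.exists_one_div_le_apply {n : ℕ} {φ : S → ℝ} (hφ : IsDeltaSkel n φ) :
    ∃ v, 1 / (n + 1 : ℝ) ≤ φ v := by
  obtain ⟨⟨-, hfin, hsum⟩, hcard⟩ := hφ
  have hsumU : ∑ v ∈ hfin.toFinset, φ v = 1 := by
    rw [← hsum, finsum_eq_sum_of_support_subset φ hfin.coe_toFinset.ge]
  have hcardU : (hfin.toFinset.card : ℝ) ≤ n + 1 := by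
    rw [hfin.encard_eq_coe_toFinset_card] at hcard
    exact_mod_cast hcard
  obtain ⟨v, -, hv⟩ := Finset.exists_le_of_sum_le (f := fun _ => 1 / (n + 1 : ℝ))
    (Finset.nonempty_of_sum_ne_zero (hsumU ▸ one_ne_zero)) (by
      rw [hsumU, Finset.sum_const, nsmul_eq_mul, mul_one_div]
      exact div_le_one_of_le₀ hcardU (by positivity))
  exact ⟨v, hv⟩

end Simplex

section Pushforward

variable {T S : Type*}

/-- The simplicial map `Δ(T) → Δ(S)` induced by a map of vertices `q : T → S`. -/
noncomputable def pushforward (q : T → S) (φ : T → ℝ) (v : S) : ℝ :=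
  ∑ᶠ t ∈ q ⁻¹' {v}, φ t

variable (q : T → S) {φ ψ : T → ℝ}

lemma support_pushforward_subset (φ : T → ℝ) : support (pushforward q φ) ⊆ q '' support φ := by
  intro v hv
  by_contra hv'
  exact hv (finsum_mem_eq_zero_of_forall_eq_zero fun t ht => by
    by_contra h
    exact hv' ⟨t, h, ht⟩)

lemma pushforward_nonneg (hφ : ∀ t, 0 ≤ φ t) (v : S) : 0 ≤ pushforward q φ v :=
  finsum_nonneg fun t => finsum_nonneg fun _ => hφ t

lemma pushforward_eq_sum [DecidableEq S] {U : Finset T} (hU : support φ ⊆ U) (v : S) :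
    pushforward q φ v = ∑ t ∈ U with q t = v, φ t :=
  finsum_mem_eq_sum_of_inter_support_eq _ (by ext t; simpa [and_comm] using fun h _ => hU h)

lemma pushforward_sub (hφ : (support φ).Finite) (hψ : (support ψ).Finite) (v : S) :
    pushforward q (φ - ψ) v = pushforward q φ v - pushforward q ψ v := by
  classical
  have hU := (hφ.union hψ).coe_toFinset
  rw [pushforward_eq_sum q (φ := φ - ψ) ((support_sub φ ψ).trans hU.ge),
    pushforward_eq_sum q (subset_union_left.trans hU.ge),
    pushforward_eq_sum q (subset_union_right.trans hU.ge), ← Finset.sum_sub_distrib]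
  rfl

lemma finsum_comp_pushforward_le (hφ : (support φ).Finite) {F : ℝ → ℝ} (hF0 : F 0 = 0)
    (hF : ∀ a b, F (a + b) ≤ F a + F b) :
    ∑ᶠ v, F (pushforward q φ v) ≤ ∑ᶠ t, F (φ t) := by
  classical
  set U := hφ.toFinset
  have hfib := pushforward_eq_sum q hφ.coe_toFinset.ge
  have hsupp : support (fun v => F (pushforward q φ v)) ⊆ ↑(U.image q) := by
    refine support_subset_iff'.2 fun v hv => ?_
    rw [hfib, Finset.filter_false_of_mem fun t ht (hqt : q t = v) =>
        hv (hqt ▸ Finset.mem_image_of_mem q ht),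
      Finset.sum_empty, hF0]
  rw [finsum_eq_sum_of_support_subset _ hsupp,
    finsum_eq_sum_of_support_subset (fun t => F (φ t))
      ((support_comp_subset hF0 φ).trans hφ.coe_toFinset.ge),
    ← Finset.sum_fiberwise_of_maps_to fun t ht => Finset.mem_image_of_mem q ht]
  exact Finset.sum_le_sum fun v _ => hfib v ▸ Finset.le_sum_of_subadditive F hF0.le hF _ _

lemma finsum_pushforward (hφ : (support φ).Finite) :
    ∑ᶠ v, pushforward q φ v = ∑ᶠ t, φ t := by
  refine le_antisymm (finsum_comp_pushforward_le q hφ (F := id) rfl fun _ _ => le_rfl) ?_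
  have := finsum_comp_pushforward_le q hφ (F := Neg.neg) neg_zero fun a b => (neg_add a b).le
  rwa [finsum_neg_distrib, finsum_neg_distrib, neg_le_neg_iff] at this

lemma l1dist_pushforward_le (hφ : (support φ).Finite) (hψ : (support ψ).Finite) :
    l1dist (pushforward q φ) (pushforward q ψ) ≤ l1dist φ ψ := by
  simp only [l1dist, ← pushforward_sub q hφ hψ]
  exact finsum_comp_pushforward_le q ((hφ.union hψ).subset (support_sub φ ψ)) abs_zero
    abs_add_le

lemma IsDeltaSkel.pushforward {n : ℕ∞} (hφ : IsDeltaSkel n φ) :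
    IsDeltaSkel n (pushforward q φ) :=
  ⟨⟨pushforward_nonneg q hφ.1.1, (hφ.1.2.1.image q).subset (support_pushforward_subset q φ),
      (finsum_pushforward q hφ.1.2.1).trans hφ.1.2.2⟩,
    ((encard_le_encard (support_pushforward_subset q φ)).trans (encard_image_le q _)).trans hφ.2⟩

end Pushforward

section PartitionOfUnity

variable {X T S : Type*} {A : Set X}

lemma PartUnitySkelOn.pushforward {n : ℕ∞} {h : X → T → ℝ} (hh : PartUnitySkelOn n h A)
    (p : T → S) : PartUnitySkelOn n (fun x => pushforward p (h x)) A := fun x hx =>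
  (hh x hx).pushforward p

lemma LipschitzEpsOn.pushforward [MetricSpace X] {n : ℕ∞} {ε : ℝ} {h : X → T → ℝ}
    (hLip : LipschitzEpsOn ε h A) (hh : PartUnitySkelOn n h A) (p : T → S) :
    LipschitzEpsOn ε (fun x => pushforward p (h x)) A := fun x hx y hy =>
  (l1dist_pushforward_le p (hh x hx).1.2.1 (hh y hy).1.2.1).trans (hLip x hx y hy)

lemma CoboundedOn.dist_le [MetricSpace X] {f : X → S → ℝ} {K : ℝ} (hf : CoboundedOn K f A)
    (hK : 0 ≤ K) {x y : X} {v : S} (hx : x ∈ A) (hy : y ∈ A)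
    (hxv : 0 < f x v) (hyv : 0 < f y v) : dist x y ≤ K :=
  (edist_le_ofReal hK).1
    ((edist_le_ediam_of_mem (s := {z | z ∈ A ∧ 0 < f z v}) ⟨hx, hxv⟩ ⟨hy, hyv⟩).trans (hf v))

lemma LipschitzEpsOn.pos_of_le_of_dist_le [MetricSpace X] {α r D : ℝ} {f : X → S → ℝ}
    (hLip : LipschitzEpsOn α f A) (hfin : ∀ c ∈ A, (support (f c)).Finite) (hα : 0 ≤ α)
    (hαD : α * (D + 1) < r) {c c' : X} (hc : c ∈ A) (hc' : c' ∈ A) (hcc' : dist c c' ≤ D)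
    {v : S} (hv : r ≤ f c v) : 0 < f c' v :=
  pos_of_le_of_l1dist_lt (hfin c hc) (hfin c' hc') hv <|
    calc l1dist (f c) (f c') ≤ α * dist c c' + α := hLip c hc c' hc'
      _ ≤ α * (D + 1) := by nlinarith
      _ < r := hαD

end PartitionOfUnity

section ConvexCombination

variable {S : Type*}

lemma convex_setOf_isDelta : Convex ℝ {φ : S → ℝ | IsDelta φ} := by
  intro φ hφ ψ hψ a b ha hb hab
  have hfin : (support (a • φ)).Finite := hφ.2.1.subset (support_smul_subset_right _ _)
  have hfin' : (support (b • ψ)).Finite := hψ.2.1.subset (support_smul_subset_right _ _)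
  refine ⟨fun v => add_nonneg (mul_nonneg ha (hφ.1 v)) (mul_nonneg hb (hψ.1 v)),
    (hfin.union hfin').subset (support_add _ _), ?_⟩
  simp only [Pi.add_apply, Pi.smul_apply, smul_eq_mul]
  rw [finsum_add_distrib (f := fun v => a * φ v) (g := fun v => b * ψ v) hfin hfin',
    ← mul_finsum, ← mul_finsum, hφ.2.2, hψ.2.2, mul_one, mul_one, hab]

lemma IsDeltaSkel.convexComb {n : ℕ∞} {φ ψ : S → ℝ} (hφ : IsDeltaSkel n φ)
    (hψ : IsDeltaSkel n ψ) {t : ℝ} (ht0 : 0 ≤ t) (ht1 : t ≤ 1)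
    (hsupp : t < 1 → support ψ ⊆ support φ) : IsDeltaSkel n ((1 - t) • φ + t • ψ) := by
  rcases ht1.lt_or_eq with ht1 | rfl
  · refine ⟨convex_setOf_isDelta hφ.1 hψ.1 (by linarith) ht0 (by ring),
      (encard_le_encard ?_).trans hφ.2⟩
    exact (support_add _ _).trans (union_subset (support_smul_subset_right _ _)
      ((support_smul_subset_right _ _).trans (hsupp ht1)))
  · simpa using hψ

lemma l1dist_convexComb_le {φ ψ φ' ψ' : S → ℝ} (hφ : (support φ).Finite)
    (hψ : (support ψ).Finite) (hφ' : IsDelta φ') (hψ' : IsDelta ψ') {a b : ℝ} (ha0 : 0 ≤ a)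
    (ha1 : a ≤ 1) :
    l1dist ((1 - a) • φ + a • ψ) ((1 - b) • φ' + b • ψ') ≤
      l1dist φ φ' + l1dist ψ ψ' + 2 * |a - b| := by
  have hfin : ∀ χ : S → ℝ, (∀ v, φ v = 0 → ψ v = 0 → φ' v = 0 → ψ' v = 0 → χ v = 0) →
      (support χ).Finite := fun χ hχ =>
    ((hφ.union hψ).union (hφ'.2.1.union hψ'.2.1)).subset fun v hv => by
      by_contra h
      simp only [mem_union, mem_support, not_or, not_not] at h
      exact hv (hχ v h.1.1 h.1.2 h.2.1 h.2.2)
  unfold l1dist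
  calc ∑ᶠ v, |((1 - a) • φ + a • ψ) v - ((1 - b) • φ' + b • ψ') v|
      ≤ ∑ᶠ v, (|φ v - φ' v| + |ψ v - ψ' v| + |a - b| * (φ' v + ψ' v)) := by
        refine finsum_le_finsum' (hfin _ fun v h1 h2 h3 h4 => by simp [h1, h2, h3, h4])
          (hfin _ fun v h1 h2 h3 h4 => by simp [h1, h2, h3, h4]) fun v => ?_
        have hexp : ((1 - a) • φ + a • ψ) v - ((1 - b) • φ' + b • ψ') v =
            (1 - a) * (φ v - φ' v) + a * (ψ v - ψ' v) + (b - a) * (φ' v - ψ' v) := by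
          simp only [Pi.add_apply, Pi.smul_apply, smul_eq_mul]
          ring
        rw [hexp]
        refine (abs_add_three _ _ _).trans (add_le_add_three ?_ ?_ ?_) <;>
          rw [abs_mul]
        · exact mul_le_of_le_one_left (abs_nonneg _) (by rw [abs_le]; constructor <;> linarith)
        · exact mul_le_of_le_one_left (abs_nonneg _) (by rw [abs_le]; constructor <;> linarith)
        · rw [abs_sub_comm b a]
          exact mul_le_mul_of_nonneg_left (abs_sub_le_iff.2
            ⟨by linarith [hψ'.1 v], by linarith [hφ'.1 v]⟩) (abs_nonneg _)
    _ = ∑ᶠ v, |φ v - φ' v| + ∑ᶠ v, |ψ v - ψ' v| + |a - b| * (∑ᶠ v, φ' v + ∑ᶠ v, ψ' v) := by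
        rw [finsum_add_distrib, finsum_add_distrib, ← mul_finsum, finsum_add_distrib] <;>
          exact hfin _ fun v h1 h2 h3 h4 => by simp [h1, h2, h3, h4]
    _ = ∑ᶠ v, |φ v - φ' v| + ∑ᶠ v, |ψ v - ψ' v| + 2 * |a - b| := by
        rw [hφ'.2.2, hψ'.2.2]
        ring

end ConvexCombination

section Cutoff

variable {X : Type*} [MetricSpace X] {A : Set X} {s : ℝ}

noncomputable def infDistCutoff (A : Set X) (s : ℝ) (x : X) : ℝ :=
  min (infDist x A / s) 1

lemma infDistCutoff_nonneg (hs : 0 ≤ s) (x : X) : 0 ≤ infDistCutoff A s x :=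
  le_min (div_nonneg infDist_nonneg hs) zero_le_one

lemma infDistCutoff_le_one (x : X) : infDistCutoff A s x ≤ 1 :=
  min_le_right _ _

lemma infDistCutoff_of_mem {x : X} (hx : x ∈ A) : infDistCutoff A s x = 0 := by
  simp [infDistCutoff, infDist_zero_of_mem hx]

lemma infDistCutoff_eq_one (hs : 0 < s) {x : X} (hx : s ≤ infDist x A) :
    infDistCutoff A s x = 1 :=
  min_eq_right ((one_le_div hs).2 hx)

lemma infDist_lt_of_infDistCutoff_lt_one (hs : 0 < s) {x : X} (hx : infDistCutoff A s x < 1) :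
    infDist x A < s :=
  lt_of_not_ge fun h => hx.ne (infDistCutoff_eq_one hs h)

lemma abs_infDistCutoff_sub_le (hs : 0 < s) (x y : X) :
    |infDistCutoff A s x - infDistCutoff A s y| ≤ dist x y / s :=
  calc |infDistCutoff A s x - infDistCutoff A s y|
      ≤ max |infDist x A / s - infDist y A / s| |1 - 1| := abs_min_sub_min_le_max _ _ _ _
    _ = |infDist x A - infDist y A| / s := by
        rw [sub_self, abs_zero, max_eq_left (abs_nonneg _), ← sub_div, abs_div, abs_of_pos hs]
    _ ≤ dist x y / s := by
        refine div_le_div_of_nonneg_right (abs_sub_le_iff.2 ⟨?_, ?_⟩) hs.le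
        · linarith [infDist_le_infDist_add_dist (s := A) (x := x) (y := y)]
        · linarith [infDist_le_infDist_add_dist (s := A) (x := y) (y := x), dist_comm x y]

end Cutoff

section Retraction

variable {X T S : Type*} [MetricSpace X] {A : Set X}

lemma exists_retraction_dist_le (hA : A.Nonempty) :
    ∃ a : X → X, (∀ x, a x ∈ A) ∧ (∀ x ∈ A, a x = x) ∧ ∀ x, dist x (a x) ≤ infDist x A + 1 := by
  have : ∀ x, ∃ y ∈ A, (x ∈ A → y = x) ∧ dist x y ≤ infDist x A + 1 := by
    intro x
    by_cases hx : x ∈ A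
    · exact ⟨x, hx, fun _ => rfl, by rw [dist_self]; exact add_nonneg infDist_nonneg zero_le_one⟩
    · obtain ⟨y, hy, hxy⟩ := (infDist_lt_iff hA).1 (lt_add_one (infDist x A))
      exact ⟨y, hy, fun h => absurd h hx, hxy.le⟩
  choose a ha using this
  exact ⟨a, fun x => (ha x).1, fun x hx => (ha x).2.1 hx, fun x => (ha x).2.2⟩

lemma exists_vertexMap (hA : A.Nonempty) {f : X → S → ℝ} {h : X → T → ℝ} {r R B : ℝ}
    (hheavy : ∀ c ∈ A, ∃ v, r ≤ f c v)
    (hstar : ∀ t x y, 0 < h x t → 0 < h y t → dist x y ≤ B) (e : T → S) :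
    ∃ p : T → S, ∀ t, (∃ c ∈ A, r ≤ f c (p t) ∧ ∀ x, 0 < h x t → dist x c ≤ B + R + 1) ∨
      (p t = e t ∧ ∀ x, 0 < h x t → R < infDist x A) := by
  have : ∀ t, ∃ v, (∃ c ∈ A, r ≤ f c v ∧ ∀ x, 0 < h x t → dist x c ≤ B + R + 1) ∨
      (v = e t ∧ ∀ x, 0 < h x t → R < infDist x A) := by
    intro t
    by_cases hnear : ∃ y, 0 < h y t ∧ infDist y A ≤ R
    · obtain ⟨y, hyt, hy⟩ := hnear
      obtain ⟨c, hcA, hyc⟩ := (infDist_lt_iff hA).1 (hy.trans_lt (lt_add_one R))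
      obtain ⟨v, hv⟩ := hheavy c hcA
      refine ⟨v, Or.inl ⟨c, hcA, hv, fun x hxt => ?_⟩⟩
      linarith [dist_triangle x y c, hstar t x y hxt hyt]
    · push Not at hnear
      exact ⟨e t, Or.inr ⟨rfl, hnear⟩⟩
  choose p hp using this
  exact ⟨p, hp⟩

end Retraction

section Cardinality

open Cardinal

lemma mk_iUnion_le_mk_prod_nat {ι α : Type u} (s : ι → Set α) (hs : ∀ i, (s i).Finite) :
    #(⋃ i, s i) ≤ #(ι × ℕ) := by
  rw [mk_prod, mk_nat, lift_aleph0, lift_uzero]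
  exact (mk_iUnion_le s).trans (mul_le_mul_right
    (ciSup_le' fun i => mk_le_aleph0_iff.2 (hs i).countable.to_subtype) _)

lemma exists_injOn_forall_notMem {T S : Type u} {V : Set T} {W : Set S} {κ : Cardinal.{u}}
    (hκ : ℵ₀ ≤ κ) (hV : #V ≤ κ) (hW : #W ≤ κ) (hS : κ < #S) :
    ∃ e : T → S, InjOn e V ∧ ∀ t, e t ∉ W := by
  classical
  have hWc : κ < #(Wᶜ : Set S) := by
    by_contra! h
    rw [← mk_sum_compl W] at hS
    exact hS.not_ge ((add_le_add hW h).trans (add_eq_self hκ).le)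
  obtain ⟨emb⟩ := (hV.trans hWc.le : #V ≤ #(Wᶜ : Set S))
  obtain ⟨w⟩ : Nonempty (Wᶜ : Set S) := mk_ne_zero_iff.1 (zero_le.trans_lt hWc).ne'
  refine ⟨fun t => if ht : t ∈ V then emb ⟨t, ht⟩ else w, fun t ht t' ht' htt' => ?_, fun t => ?_⟩
  · simp only [dif_pos ht, dif_pos ht'] at htt'
    exact congrArg Subtype.val (emb.injective (Subtype.ext htt'))
  · dsimp only
    split_ifs
    exacts [(emb _).2, w.2]

end Cardinality

section Blend

variable {X S : Type*} [MetricSpace X] {A : Set X} {s : ℝ} {a : X → X} {f G : X → S → ℝ}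

noncomputable def cutoffBlend (A : Set X) (s : ℝ) (a : X → X) (f G : X → S → ℝ) (x : X) :
    S → ℝ :=
  (1 - infDistCutoff A s x) • f (a x) + infDistCutoff A s x • G x

lemma cutoffBlend_of_mem (ha : ∀ x ∈ A, a x = x) {x : X} (hx : x ∈ A) :
    cutoffBlend A s a f G x = f x := by
  simp [cutoffBlend, infDistCutoff_of_mem hx, ha x hx]

lemma cutoffBlend_of_le_infDist (hs : 0 < s) {x : X} (hx : s ≤ infDist x A) :
    cutoffBlend A s a f G x = G x := by
  simp [cutoffBlend, infDistCutoff_eq_one hs hx]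

lemma isDelta_cutoffBlend (hs : 0 ≤ s) (hf : ∀ c ∈ A, IsDelta (f c)) (hG : ∀ x, IsDelta (G x))
    (ha : ∀ x, a x ∈ A) (x : X) : IsDelta (cutoffBlend A s a f G x) :=
  convex_setOf_isDelta (hf _ (ha x)) (hG x) (sub_nonneg.2 (infDistCutoff_le_one x))
    (infDistCutoff_nonneg hs x) (sub_add_cancel _ _)

lemma partUnitySkelOn_cutoffBlend {n : ℕ∞} (hs : 0 < s) (hf : PartUnitySkelOn n f A)
    (ha : ∀ x, a x ∈ A) (hG : PartUnitySkelOn n G univ)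
    (hsupp : ∀ x, infDist x A < s → support (G x) ⊆ support (f (a x))) :
    PartUnitySkelOn n (cutoffBlend A s a f G) univ := fun x _ =>
  (hf (a x) (ha x)).convexComb (hG x trivial) (infDistCutoff_nonneg hs.le x)
    (infDistCutoff_le_one x) fun h1 => hsupp x (infDist_lt_of_infDistCutoff_lt_one hs h1)

lemma pos_or_pos_of_cutoffBlend_pos (hs : 0 < s) {x : X} {v : S}
    (hxv : 0 < cutoffBlend A s a f G x v) :
    (infDist x A < s ∧ 0 < f (a x) v) ∨ 0 < G x v := by
  simp only [cutoffBlend, Pi.add_apply, Pi.smul_apply, smul_eq_mul] at hxv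
  by_contra! H
  rcases (infDistCutoff_le_one (A := A) (s := s) x).lt_or_eq with h1 | h1
  · nlinarith [H.1 (infDist_lt_of_infDistCutoff_lt_one hs h1), H.2,
      infDistCutoff_nonneg (A := A) hs.le x]
  · rw [h1] at hxv
    linarith [H.2]

/-- Three regimes for `s = 8 / δ`: beyond `s` from `A` the blend is `G`; within `2 s` of `A`
moving to the retraction costs `α (4 s + 3)`; otherwise the points are more than `s` apart and
`l1dist ≤ 2 ≤ δ s`. -/
lemma lipschitzEpsOn_cutoffBlend {δ α : ℝ} (hδ : 0 < δ) (hα : 0 ≤ α)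
    (hαδ : α * (32 / δ + 3) ≤ δ / 2) (hf : ∀ c ∈ A, IsDelta (f c)) (hG : ∀ x, IsDelta (G x))
    (ha : ∀ x, a x ∈ A) (hadist : ∀ x, dist x (a x) ≤ infDist x A + 1)
    (hfLip : LipschitzEpsOn α f A) (hGLip : LipschitzEpsOn (δ / 4) G univ) :
    LipschitzEpsOn δ (cutoffBlend A (8 / δ) a f G) univ := by
  intro x _ y _
  have hs : 0 < 8 / δ := by positivity
  have hd := dist_nonneg (x := x) (y := y)
  have hGxy := hGLip x trivial y trivial
  by_cases hfar : 8 / δ ≤ infDist x A ∧ 8 / δ ≤ infDist y A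
  · rw [cutoffBlend_of_le_infDist hs hfar.1, cutoffBlend_of_le_infDist hs hfar.2]
    nlinarith
  by_cases hnear : infDist x A ≤ 2 * (8 / δ) ∧ infDist y A ≤ 2 * (8 / δ)
  · have hα' : α ≤ δ / 2 :=
      (le_mul_of_one_le_right hα (le_add_of_nonneg_of_le (by positivity) (by norm_num))).trans hαδ
    have haxy : dist (a x) (a y) ≤ dist x y + 4 * (8 / δ) + 2 := by
      linarith [dist_triangle4 (a x) x y (a y), dist_comm (a x) x, hadist x, hadist y]
    have hcut := abs_infDistCutoff_sub_le (A := A) hs x y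
    have h8 : 2 * (dist x y / (8 / δ)) = δ / 4 * dist x y := by field_simp; ring
    calc l1dist (cutoffBlend A (8 / δ) a f G x) (cutoffBlend A (8 / δ) a f G y)
        ≤ l1dist (f (a x)) (f (a y)) + l1dist (G x) (G y) +
            2 * |infDistCutoff A (8 / δ) x - infDistCutoff A (8 / δ) y| :=
          l1dist_convexComb_le (hf _ (ha x)).2.1 (hG x).2.1 (hf _ (ha y)) (hG y)
            (infDistCutoff_nonneg hs.le x) (infDistCutoff_le_one x)
      _ ≤ (α * (dist x y + 4 * (8 / δ) + 2) + α) + (δ / 4 * dist x y + δ / 4) +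
            2 * (dist x y / (8 / δ)) := by
          gcongr
          exact (hfLip _ (ha x) _ (ha y)).trans (by gcongr)
      _ = α * dist x y + α * (32 / δ + 3) + δ / 2 * dist x y + δ / 4 := by
          rw [h8]
          ring
      _ ≤ δ * dist x y + δ := by
          linarith [mul_le_mul_of_nonneg_right hα' hd]
  · have hsep : 8 / δ < dist x y := by
      have h1 := infDist_le_infDist_add_dist (s := A) (x := x) (y := y)
      have h2 := infDist_le_infDist_add_dist (s := A) (x := y) (y := x)
      rw [dist_comm] at h2
      rw [not_and_or, not_le, not_le] at hfar hnear
      rcases hfar with h | h <;> rcases hnear with h' | h' <;> linarith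
    have h8 : δ * (8 / δ) = 8 := by field_simp
    linarith [(isDelta_cutoffBlend hs.le hf hG ha x).l1dist_le_two
      (isDelta_cutoffBlend hs.le hf hG ha y), mul_lt_mul_of_pos_left hsep hδ]

end Blend

section Extension

open Cardinal

lemma coboundedOn_of_forall_pos {X S T : Type*} [MetricSpace X] {A : Set X} {f g : X → S → ℝ}
    {h : X → T → ℝ} {e : T → S} {K B R : ℝ} (hK : 0 ≤ K) (hB : 0 ≤ B) (hBR : B ≤ K + 2 * R)
    (hfCob : CoboundedOn K f A) (hhCob : CoboundedOn B h univ)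
    (he : InjOn e (⋃ x, support (h x))) (heA : ∀ t, ∀ c ∈ A, f c (e t) = 0)
    (hg : ∀ x v, 0 < g x v → (∃ c ∈ A, 0 < f c v ∧ dist x c ≤ R) ∨ ∃ t, e t = v ∧ 0 < h x t) :
    CoboundedOn (K + 2 * R) g univ := by
  intro v
  refine ediam_le_of_forall_dist_le ?_
  rintro x ⟨-, hx⟩ y ⟨-, hy⟩
  rcases hg x v hx with ⟨c, hcA, hcv, hxc⟩ | ⟨t, rfl, hxt⟩ <;>
    rcases hg y _ hy with ⟨c', hc'A, hc'v, hyc'⟩ | ⟨t', ht', hyt'⟩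
  · linarith [dist_triangle4 x c c' y, dist_comm y c', hfCob.dist_le hK hcA hc'A hcv hc'v]
  · exact absurd (heA t' c hcA) (ht' ▸ hcv.ne')
  · exact absurd (heA t c' hc'A) hc'v.ne'
  · obtain rfl : t = t' :=
      he (mem_iUnion.2 ⟨x, hxt.ne'⟩) (mem_iUnion.2 ⟨y, hyt'.ne'⟩) ht'.symm
    linarith [hhCob.dist_le hB trivial trivial hxt hyt']

variable {X S T : Type u} [MetricSpace X]

theorem exists_extension_of_injOn (n : ℕ) {δ K B α : ℝ} (hδ : 0 < δ) (hK : 0 ≤ K) (hB : 0 ≤ B)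
    (hα : 0 ≤ α) (hαδ : α * (32 / δ + B + 3) ≤ δ / 2) (hαn : α * (32 / δ + B + 3) < 1 / (n + 1))
    {h : X → T → ℝ} (hhPU : PartUnitySkelOn n h univ)
    (hhLip : LipschitzEpsOn (δ / 4) h univ) (hhCob : CoboundedOn B h univ) {A : Set X}
    (hA : A.Nonempty) {f : X → S → ℝ} (hfPU : PartUnitySkelOn n f A)
    (hfLip : LipschitzEpsOn α f A) (hfCob : CoboundedOn K f A) {e : T → S}
    (he : InjOn e (⋃ x, support (h x))) (heA : ∀ t, ∀ c ∈ A, f c (e t) = 0) :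
    ∃ g : X → S → ℝ, (∀ x ∈ A, g x = f x) ∧ PartUnitySkelOn n g univ ∧
      LipschitzEpsOn δ g univ ∧ CoboundedOn (K + 2 * B + 32 / δ + 2) g univ := by
  have hs : 0 < 8 / δ := by positivity
  have hpos : ∀ x t, h x t ≠ 0 → 0 < h x t := fun x t ht =>
    ((hhPU x trivial).1.1 t).lt_of_ne' ht
  obtain ⟨a, haA, hafix, hadist⟩ := exists_retraction_dist_le hA
  obtain ⟨p, hp⟩ := exists_vertexMap hA (h := h) (R := 2 * (8 / δ))
    (fun c hc => (hfPU c hc).exists_one_div_le_apply)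
    (fun t x y hx hy => hhCob.dist_le hB trivial trivial hx hy) e
  set G : X → S → ℝ := fun x => pushforward p (h x)
  have hsupp : ∀ x, infDist x A < 8 / δ → support (G x) ⊆ support (f (a x)) := by
    refine fun x hx => (support_pushforward_subset p (h x)).trans ?_
    rintro _ ⟨t, ht, rfl⟩
    obtain ⟨c, hcA, hc, hxc⟩ := (hp t).resolve_right fun h' => by
      linarith [h'.2 x (hpos x t ht)]
    refine (hfLip.pos_of_le_of_dist_le (fun c hc => (hfPU c hc).1.2.1) hα ?_ hcA (haA x)
      (D := B + 3 * (8 / δ) + 2) ?_ hc).ne'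
    · calc α * (B + 3 * (8 / δ) + 2 + 1) ≤ α * (32 / δ + B + 3) := by
            rw [show 32 / δ = 4 * (8 / δ) by ring]
            nlinarith [mul_nonneg hα hs.le]
        _ < 1 / (n + 1) := hαn
    · linarith [dist_triangle c x (a x), dist_comm c x, hxc x (hpos x t ht), hadist x]
  have hcover : ∀ x v, 0 < cutoffBlend A (8 / δ) a f G x v →
      (∃ c ∈ A, 0 < f c v ∧ dist x c ≤ B + 2 * (8 / δ) + 1) ∨ ∃ t, e t = v ∧ 0 < h x t := by
    intro x v hxv
    rcases pos_or_pos_of_cutoffBlend_pos hs hxv with ⟨hx, hv⟩ | hv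
    · exact Or.inl ⟨a x, haA x, hv, by linarith [hadist x]⟩
    · obtain ⟨t, ht, rfl⟩ := support_pushforward_subset p (h x) hv.ne'
      rcases hp t with ⟨c, hcA, hc, hxc⟩ | ⟨hpt, -⟩
      · exact Or.inl ⟨c, hcA, hc.trans_lt' (by positivity), hxc x (hpos x t ht)⟩
      · exact Or.inr ⟨t, hpt.symm, hpos x t ht⟩
  refine ⟨cutoffBlend A (8 / δ) a f G, fun x hx => cutoffBlend_of_mem hafix hx,
    partUnitySkelOn_cutoffBlend hs hfPU haA (hhPU.pushforward p) hsupp,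
    lipschitzEpsOn_cutoffBlend hδ hα (by nlinarith) (fun c hc => (hfPU c hc).1)
      (fun x => (hhPU.pushforward p x trivial).1) haA hadist hfLip (hhLip.pushforward hhPU p), ?_⟩
  convert coboundedOn_of_forall_pos hK hB (by linarith) hfCob hhCob he heA hcover
    using 1
  ring

theorem exists_extension_of_nonempty (n : ℕ) {δ K B α : ℝ} (hδ : 0 < δ) (hK : 0 ≤ K)
    (hB : 0 ≤ B) (hα : 0 ≤ α) (hαδ : α * (32 / δ + B + 3) ≤ δ / 2)
    (hαn : α * (32 / δ + B + 3) < 1 / (n + 1)) (hS : #(X × ℕ) < #S) {h : X → T → ℝ}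
    (hhPU : PartUnitySkelOn n h univ) (hhLip : LipschitzEpsOn (δ / 4) h univ)
    (hhCob : CoboundedOn B h univ) {A : Set X} (hA : A.Nonempty) {f : X → S → ℝ}
    (hfPU : PartUnitySkelOn n f A) (hfLip : LipschitzEpsOn α f A) (hfCob : CoboundedOn K f A) :
    ∃ g : X → S → ℝ, (∀ x ∈ A, g x = f x) ∧ PartUnitySkelOn n g univ ∧
      LipschitzEpsOn δ g univ ∧ CoboundedOn (K + 2 * B + 32 / δ + 2) g univ := by
  have : Nonempty X := ⟨hA.some⟩
  obtain ⟨e, he, heW⟩ := exists_injOn_forall_notMem (aleph0_le_mk (X × ℕ))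
    (mk_iUnion_le_mk_prod_nat _ fun x => (hhPU x trivial).1.2.1)
    ((mk_iUnion_le_mk_prod_nat (fun c : A => support (f c)) fun c => (hfPU c c.2).1.2.1).trans
      (mk_le_of_injective (Subtype.val_injective.prodMap injective_id))) hS
  exact exists_extension_of_injOn n hδ hK hB hα hαδ hαn hhPU hhLip hhCob hA hfPU hfLip hfCob he
    fun t c hc => by_contra fun hct => heW t (mem_iUnion.2 ⟨⟨c, hc⟩, hct⟩)

theorem exists_extension (n : ℕ) {δ K B α : ℝ} (hδ : 0 < δ) (hK : 0 ≤ K)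
    (hB : 0 ≤ B) (hα : 0 ≤ α) (hαδ : α * (32 / δ + B + 3) ≤ δ / 2)
    (hαn : α * (32 / δ + B + 3) < 1 / (n + 1)) (hS : #(X × ℕ) < #S) {h : X → T → ℝ}
    (hhPU : PartUnitySkelOn n h univ) (hhLip : LipschitzEpsOn (δ / 4) h univ)
    (hhCob : CoboundedOn B h univ) {A : Set X} {f : X → S → ℝ}
    (hfPU : PartUnitySkelOn n f A) (hfLip : LipschitzEpsOn α f A) (hfCob : CoboundedOn K f A) :
    ∃ g : X → S → ℝ, (∀ x ∈ A, g x = f x) ∧ PartUnitySkelOn n g univ ∧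
      LipschitzEpsOn δ g univ ∧ CoboundedOn (K + 2 * B + 32 / δ + 2) g univ := by
  rcases A.eq_empty_or_nonempty with rfl | hA
  · rcases isEmpty_or_nonempty X with hX | ⟨⟨x₀⟩⟩
    · exact ⟨f, fun _ h => h.elim, fun x => isEmptyElim x, fun x => isEmptyElim x,
        fun v => (ediam_subsingleton subsingleton_of_subsingleton).trans_le zero_le⟩
    -- an empty `A` is replaced by `{x₀}`, sent to the vertex `v₀`
    classical
    obtain ⟨v₀⟩ : Nonempty S := mk_ne_zero_iff.1 (zero_le.trans_lt hS).ne'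
    obtain ⟨g, -, hg⟩ := exists_extension_of_nonempty n hδ hK hB hα hαδ hαn hS hhPU hhLip hhCob
      (singleton_nonempty x₀) (f := fun _ => Pi.single v₀ 1)
      (fun _ _ => isDeltaSkel_single _ v₀)
      (fun _ _ _ _ => by simp only [l1dist, sub_self, abs_zero, finsum_zero]; positivity)
      fun v => (ediam_subsingleton (subsingleton_singleton.anti (sep_subset _ _))).trans_le zero_le
    exact ⟨g, fun _ h => h.elim, hg⟩
  · exact exists_extension_of_nonempty n hδ hK hB hα hαδ hαn hS hhPU hhLip hhCob hA hfPU hfLip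
      hfCob

end Extension

theorem lsExtDimLE_of_forall_exists {X S : Type u} [MetricSpace X] (n : ℕ)
    (h : ℝ → X → S → ℝ) (B : ℝ → ℝ) (hPU : ∀ ε > 0, PartUnitySkelOn n (h ε) univ)
    (hLip : ∀ ε > 0, LipschitzEpsOn ε (h ε) univ) (hB : ∀ ε > 0, 0 < B ε)
    (hCob : ∀ ε > 0, CoboundedOn (B ε) (h ε) univ) :
    LsExtDimLE X n (Ioi 0) (fun δ => min δ (1 / (n + 1)) / (2 * (32 / δ + B (δ / 4) + 3)))
      (fun δ K => K + 2 * B (δ / 4) + 32 / δ + 2) := by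
  intro S' hS' K hK δ (hδ : 0 < δ) A f hfPU hfLip hfCob
  have hδ4 : 0 < δ / 4 := by positivity
  have hc : 0 < 32 / δ + B (δ / 4) + 3 := by have := hB _ hδ4; positivity
  have hαc : min δ (1 / (n + 1)) / (2 * (32 / δ + B (δ / 4) + 3)) * (32 / δ + B (δ / 4) + 3) =
      min δ (1 / (n + 1)) / 2 := by rw [div_mul_eq_mul_div, mul_div_mul_right _ _ hc.ne']
  refine exists_extension n hδ hK.le (hB _ hδ4).le (by positivity) ?_ ?_ hS' (hPU _ hδ4)
    (hLip _ hδ4) (hCob _ hδ4) hfPU hfLip hfCob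
  · rw [hαc]
    linarith [min_le_left δ (1 / (n + 1 : ℝ))]
  · rw [hαc]
    linarith [min_le_right δ (1 / (n + 1 : ℝ)), (by positivity : (0 : ℝ) < 1 / (n + 1))]

theorem exists_partUnity_of_lsExtDimLE {X S : Type u} [MetricSpace X] {n : ℕ∞}
    {α : ℝ → ℝ} {M : ℝ → ℝ → ℝ} (hdim : LsExtDimLE X n (Ioi 0) α M)
    (hS : Cardinal.mk (X × ℕ) < Cardinal.mk S) {ε : ℝ} (hε : 0 < ε) :
    ∃ f : X → S → ℝ, PartUnitySkelOn n f univ ∧ LipschitzEpsOn ε f univ ∧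
      CoboundedOn (M ε 1) f univ := by
  obtain ⟨g, -, hg⟩ := hdim S hS 1 one_pos ε hε ∅ 0 (fun _ h => h.elim) (fun _ h => h.elim)
    fun v => (ediam_subsingleton (subsingleton_empty.anti (sep_subset _ _))).trans_le zero_le
  exact ⟨g, hg⟩

/-- Theorem 6.4 for finite `n`. For a metric space `X`, `n ∈ ℕ`, and a
set `S` of cardinality bigger than `card(X × ℕ)`, the following are equivalent:
(1) for each `ε > 0` there is an `(ε,ε)`-Lipschitz partition of unity `f : X → Δ(S)⁽ⁿ⁾`
with `{f⁻¹(st v)}` uniformly bounded; (2) there are `α : (0,∞) → (0,∞)` and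
`M : (0,∞) × (0,∞) → (0,∞)` with `LsExtDim(X, α, M) ≤ n`. -/
theorem stmt10 {X : Type u} [MetricSpace X] (n : ℕ) (S : Type u)
    (hS : Cardinal.mk (X × ℕ) < Cardinal.mk S) :
    (∀ ε > (0:ℝ), ∃ f : X → S → ℝ, PartUnitySkelOn (n : ℕ∞) f Set.univ ∧
      LipschitzEpsOn ε f Set.univ ∧ ∃ M' : ℝ, 0 < M' ∧ CoboundedOn M' f Set.univ) ↔
    (∃ α : ℝ → ℝ, ∃ M : ℝ → ℝ → ℝ, (∀ δ > (0:ℝ), 0 < α δ) ∧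
      (∀ δ > (0:ℝ), ∀ K > (0:ℝ), 0 < M δ K) ∧ LsExtDimLE X (n : ℕ∞) (Set.Ioi 0) α M) := by
  constructor
  · intro H
    choose! h hPU hLip B hB hCob using H
    refine ⟨_, _, fun δ hδ => ?_, fun δ hδ K hK => ?_,
      lsExtDimLE_of_forall_exists n h B hPU hLip hB hCob⟩ <;>
    · have := hB (δ / 4) (by positivity)
      positivity
  · rintro ⟨α, M, -, hM, hdim⟩ ε hε
    obtain ⟨f, hfPU, hfLip, hfCob⟩ := exists_partUnity_of_lsExtDimLE hdim hS hε
    exact ⟨f, hfPU, hfLip, M ε 1, hM ε hε 1 one_pos, hfCob⟩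
end
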